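/- arXiv:1103.2235 — 10 statements merged into one kernel-verified Lean document; each statement's English description precedes it below -/
import Mathlib

section
/- Define P(s) := P^b · (s·Hᵀ R⁻¹ H P^b + I)⁻¹ for s ≥ 0. Then P is differentiable on [0,∞), satisfies the matrix Riccati differential equation dP/ds = − P Hᵀ R⁻¹ H P, and satisfies the initial condition P(0) = P^b. -/
/-!
With `A = Hᵀ R⁻¹ H ⪰ 0` we have `P s = P^b (s A P^b + 1)⁻¹`. Writing `P^b = S²` with `S = √P^b`,
Sylvester's identity gives `det (s A S² + 1) = det (S (s A) S + 1) > 0` for `s ≥ 0`, so the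
inverse exists, and `d/ds G⁻¹ = -G⁻¹ G' G⁻¹` with `G' = A P^b` turns into
`-P^b G⁻¹ A P^b G⁻¹ = -P A P`.
-/

open Matrix

attribute [local instance] Matrix.normedAddCommGroup Matrix.normedSpace

open scoped ComplexOrder in
theorem Matrix.PosSemidef.isUnit_mul_add_one {n 𝕜 : Type*} [Fintype n] [DecidableEq n] [RCLike 𝕜]
    {A B : Matrix n n 𝕜} (hA : A.PosSemidef) (hB : B.PosSemidef) : IsUnit (A * B + 1) := by
  open MatrixOrder in
  obtain ⟨S, hS, rfl⟩ : ∃ S : Matrix n n 𝕜, Sᴴ = S ∧ B = S * S :=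
    ⟨CFC.sqrt B, (CFC.sqrt_nonneg B).posSemidef.isHermitian,
      (CFC.sqrt_mul_sqrt_self B hB.nonneg).symm⟩
  have hSAS : (S * A * S + 1).PosDef := by
    refine PosDef.posSemidef_add ?_ PosDef.one
    simpa [hS] using hA.conjTranspose_mul_mul_same S
  rw [isUnit_iff_isUnit_det, ← Matrix.mul_assoc, det_mul_add_one_comm, ← Matrix.mul_assoc,
    ← isUnit_iff_isUnit_det]
  exact hSAS.isUnit

section

variable {n 𝕜 : Type*} [Fintype n] [DecidableEq n] [NontriviallyNormedField 𝕜]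
  {f : 𝕜 → Matrix n n 𝕜} {f' : Matrix n n 𝕜} {x : 𝕜}

theorem HasDerivAt.matrix_inv [CompleteSpace 𝕜] (hf : HasDerivAt f f' x) (hx : IsUnit (f x)) :
    HasDerivAt (fun t => (f t)⁻¹) (-((f x)⁻¹ * f' * (f x)⁻¹)) x := by
  -- `HasDerivAt` only sees the topology, which every matrix norm induces, so we may borrow the
  -- normed algebra structure of the `L∞` operator norm.
  let _ : NormedRing (Matrix n n 𝕜) := Matrix.linftyOpNormedRing
  let _ : NormedAlgebra 𝕜 (Matrix n n 𝕜) := Matrix.linftyOpNormedAlgebra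
  have _ : HasSummableGeomSeries (Matrix n n 𝕜) :=
    @instHasSummableGeomSeriesOfCompleteSpace _ _ (Matrix.instCompleteSpace n n 𝕜)
  have := (hasFDerivAt_ringInverse (𝕜 := 𝕜) hx.unit).comp_hasDerivAt x hf
  rwa [_root_.neg_apply, ContinuousLinearMap.mulLeftRight_apply, Matrix.coe_units_inv,
    IsUnit.unit_spec, show Ring.inverse ∘ f = fun t => (f t)⁻¹ from
      funext fun t => (nonsing_inv_eq_ringInverse (f t)).symm] at this

theorem HasDerivAt.matrix_const_mul (C : Matrix n n 𝕜) (hf : HasDerivAt f f' x) :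
    HasDerivAt (fun t => C * f t) (C * f') x := by
  let _ : NormedRing (Matrix n n 𝕜) := Matrix.linftyOpNormedRing
  let _ : NormedAlgebra 𝕜 (Matrix n n 𝕜) := Matrix.linftyOpNormedAlgebra
  exact hf.const_mul C

end

/-- `P(s) := P^b (s·Hᵀ R⁻¹ H P^b + I)⁻¹` is differentiable on `[0,∞)`, satisfies the
matrix Riccati equation `dP/ds = − P Hᵀ R⁻¹ H P` there, and satisfies `P(0) = P^b`. -/
theorem stmt_1 {N L : ℕ}
    (Pb : Matrix (Fin N) (Fin N) ℝ) (H : Matrix (Fin L) (Fin N) ℝ)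
    (R : Matrix (Fin L) (Fin L) ℝ)
    (hPb : Pb.PosSemidef) (hR : R.PosDef)
    (P : ℝ → Matrix (Fin N) (Fin N) ℝ)
    (hP : ∀ s : ℝ, P s = Pb * (s • (Hᵀ * R⁻¹ * H * Pb) + 1)⁻¹) :
    (∀ s ∈ Set.Ici (0:ℝ),
      HasDerivWithinAt P (-(P s * Hᵀ * R⁻¹ * H * P s)) (Set.Ici 0) s) ∧
    P 0 = Pb := by
  set A := Hᵀ * R⁻¹ * H
  have hA : A.PosSemidef := by
    simpa using hR.inv.posSemidef.conjTranspose_mul_mul_same H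
  refine ⟨fun s hs => ?_, by simp [hP]⟩
  have hunit : IsUnit (s • (A * Pb) + 1) := by
    rw [← smul_mul_assoc]
    exact (hA.smul (Set.mem_Ici.mp hs)).isUnit_mul_add_one hPb
  have hlin : HasDerivAt (fun t : ℝ => t • (A * Pb) + 1) (A * Pb) s :=
    (((hasDerivAt_id s).smul_const (A * Pb)).add_const 1).congr_deriv (one_smul ℝ _)
  rw [show P = fun t => Pb * (t • (A * Pb) + 1)⁻¹ from funext hP]
  refine ((hlin.matrix_inv hunit).matrix_const_mul Pb).hasDerivWithinAt.congr_deriv ?_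
  simp only [A, Matrix.mul_assoc, Matrix.mul_neg]
end

section
/- For every s ≥ 0, the matrix P(s) := P^b · (s·Hᵀ R⁻¹ H P^b + I)⁻¹ is symmetric and positive semidefinite. -/
/-!
Factor `P^b = Bᴴ B`. The push-through identity `B (1 + X B)⁻¹ = (1 + B X)⁻¹ B`, applied with
`X = A Bᴴ` where `A = s Hᵀ R⁻¹ H`, rewrites `P(s)` as the congruence `Bᴴ (1 + B A Bᴴ)⁻¹ B` of the
inverse of a positive semidefinite matrix, which is again positive semidefinite.
-/

open Matrix

namespace Matrix

variable {m n : Type*} [Fintype m] [Fintype n] [DecidableEq m] [DecidableEq n]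

/-- The push-through identity. No invertibility is assumed: by the Weinstein–Aronszajn identity
`1 + A B` and `1 + B A` are invertible together, and otherwise both junk inverses are `0`. -/
theorem mul_inv_one_add_mul_comm {α : Type*} [CommRing α] (A : Matrix m n α)
    (B : Matrix n m α) : A * (1 + B * A)⁻¹ = (1 + A * B)⁻¹ * A := by
  by_cases h : IsUnit (1 + A * B).det
  · have h' : IsUnit (1 + B * A).det := det_one_add_mul_comm A B ▸ h
    have hswap : (1 + A * B) * A = A * (1 + B * A) := by
      rw [Matrix.add_mul, Matrix.mul_add, Matrix.one_mul, Matrix.mul_one, Matrix.mul_assoc]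
    calc A * (1 + B * A)⁻¹ = (1 + A * B)⁻¹ * ((1 + A * B) * A) * (1 + B * A)⁻¹ := by
          rw [nonsing_inv_mul_cancel_left _ _ h]
      _ = (1 + A * B)⁻¹ * (A * (1 + B * A)) * (1 + B * A)⁻¹ := by
          rw [hswap]
      _ = (1 + A * B)⁻¹ * A := by
          rw [← Matrix.mul_assoc, mul_nonsing_inv_cancel_right _ _ h']
  · rw [nonsing_inv_apply_not_isUnit _ h,
      nonsing_inv_apply_not_isUnit _ (det_one_add_mul_comm A B ▸ h), Matrix.mul_zero,
      Matrix.zero_mul]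

open scoped ComplexOrder MatrixOrder in
theorem PosSemidef.mul_inv_mul_add_one {𝕜 : Type*} [RCLike 𝕜] {P A : Matrix n n 𝕜}
    (hP : P.PosSemidef) (hA : A.PosSemidef) : (P * (A * P + 1)⁻¹).PosSemidef := by
  obtain ⟨B, rfl⟩ := CStarAlgebra.nonneg_iff_eq_star_mul_self.mp hP.nonneg
  rw [star_eq_conjTranspose]
  have hcongr : Bᴴ * B * (A * (Bᴴ * B) + 1)⁻¹ = Bᴴ * (1 + B * A * Bᴴ)⁻¹ * B := by
    rw [add_comm, ← Matrix.mul_assoc A, Matrix.mul_assoc Bᴴ, mul_inv_one_add_mul_comm,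
      Matrix.mul_assoc B, Matrix.mul_assoc]
  rw [hcongr]
  exact (PosSemidef.one.add (hA.mul_mul_conjTranspose_same B)).inv.conjTranspose_mul_mul_same B

end Matrix

/-- For every `s ≥ 0`, the matrix `P(s) := P^b (s·Hᵀ R⁻¹ H P^b + I)⁻¹` is symmetric and
positive semidefinite. -/
theorem stmt_2 {N L : ℕ}
    (Pb : Matrix (Fin N) (Fin N) ℝ) (H : Matrix (Fin L) (Fin N) ℝ)
    (R : Matrix (Fin L) (Fin L) ℝ)
    (hPb : Pb.PosSemidef) (hR : R.PosDef)
    (P : ℝ → Matrix (Fin N) (Fin N) ℝ)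
    (hP : ∀ s : ℝ, P s = Pb * (s • (Hᵀ * R⁻¹ * H * Pb) + 1)⁻¹) :
    ∀ s : ℝ, 0 ≤ s → (P s).IsSymm ∧ (P s).PosSemidef := by
  intro s hs
  have hA : (s • (Hᵀ * R⁻¹ * H)).PosSemidef :=
    (hR.inv.posSemidef.conjTranspose_mul_mul_same H).smul hs
  have hPs : (P s).PosSemidef := by
    rw [hP s, ← Matrix.smul_mul]
    exact hPb.mul_inv_mul_add_one hA
  exact ⟨isHermitian_iff_isSymm.mp hPs.isHermitian, hPs⟩
end

section
/- Suppose P^b is in addition positive definite. Then the solution of the Riccati ODE dP/ds = − P Hᵀ R⁻¹ H P with P(0) = P^b satisfies, at pseudo-time s = 1, P(1) = ((P^b)⁻¹ + Hᵀ R⁻¹ H)⁻¹; that is, integrating the Kalman–Bucy covariance equation over the unit pseudo-time interval reproduces the discrete Kalman filter analysis covariance P^a. -/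
open Matrix Set

attribute [local instance] Matrix.normedAddCommGroup Matrix.normedSpace

/-!
Along a solution `P` of `P' = -P A P`, the matrix `F s = (P₀⁻¹ + s • A) * P s - 1` satisfies the
linear equation `F' = F * (-(A * P s))` and `F 0 = 0`. By uniqueness for linear ODEs, `F`
vanishes identically, so `P s` is the inverse of `P₀⁻¹ + s • A`.
-/

section MatrixMul

variable {𝕜 : Type*} [NontriviallyNormedField 𝕜] [CompleteSpace 𝕜]
  {l m n : Type*} [Fintype l] [Fintype m] [Fintype n]

noncomputable def Matrix.mulCLM : Matrix l m 𝕜 →L[𝕜] Matrix m n 𝕜 →L[𝕜] Matrix l n 𝕜 :=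
  LinearMap.toContinuousLinearMap <| LinearMap.toContinuousLinearMap.toLinearMap ∘ₗ
    LinearMap.mk₂ 𝕜 (· * ·) Matrix.add_mul Matrix.smul_mul Matrix.mul_add
      (fun c A B => Matrix.mul_smul A c B)

theorem HasDerivWithinAt.matrix_mul {f : 𝕜 → Matrix l m 𝕜} {g : 𝕜 → Matrix m n 𝕜}
    {f' : Matrix l m 𝕜} {g' : Matrix m n 𝕜} {s : Set 𝕜} {x : 𝕜}
    (hf : HasDerivWithinAt f f' s x) (hg : HasDerivWithinAt g g' s x) :
    HasDerivWithinAt (fun t => f t * g t) (f' * g x + f x * g') s x := by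
  rw [add_comm]
  exact mulCLM.hasDerivWithinAt_of_bilinear hf hg

end MatrixMul

theorem eqOn_zero_of_linear_ODE {E : Type*} [NormedAddCommGroup E] [NormedSpace ℝ E]
    {A : ℝ → E →L[ℝ] E} {f : ℝ → E} {a b : ℝ} (hA : ContinuousOn A (Icc a b))
    (hf : ∀ t ∈ Icc a b, HasDerivWithinAt f (A t (f t)) (Icc a b) t) (ha : f a = 0) :
    EqOn f 0 (Icc a b) := by
  obtain ⟨M, hM⟩ := isCompact_Icc.exists_bound_of_continuousOn hA
  have hlip : ∀ t ∈ Ico a b, LipschitzOnWith M.toNNReal (A t) univ := fun t ht => by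
    have hnorm : ‖A t‖₊ ≤ M.toNNReal := by
      simpa only [norm_toNNReal] using Real.toNNReal_le_toNNReal (hM t (Ico_subset_Icc_self ht))
    exact ((A t).lipschitz.weaken hnorm).lipschitzOnWith
  refine ODE_solution_unique_of_mem_Icc_right hlip (fun t ht => (hf t ht).continuousWithinAt)
    (fun t ht => (hf t (Ico_subset_Icc_self ht)).mono_of_mem_nhdsWithin (Icc_mem_nhdsGE_of_mem ht))
    (fun _ _ => mem_univ _) continuousOn_const (fun t _ => ?_) (fun _ _ => mem_univ _) ha
  rw [Pi.zero_apply, map_zero]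
  exact hasDerivWithinAt_const t (Ici t) (0 : E)

theorem Matrix.riccati_eq_inv_add_smul {n : Type*} [Fintype n] [DecidableEq n]
    {A P₀ : Matrix n n ℝ} (hP₀ : IsUnit P₀.det) {P : ℝ → Matrix n n ℝ} {T : ℝ}
    (hP : ∀ s ∈ Icc 0 T, HasDerivWithinAt P (-(P s * A * P s)) (Icc 0 T) s) (h0 : P 0 = P₀)
    {t : ℝ} (ht : t ∈ Icc 0 T) :
    P t = (P₀⁻¹ + t • A)⁻¹ := by
  set Q : ℝ → Matrix n n ℝ := fun s => P₀⁻¹ + s • A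
  have hQ : ∀ s, HasDerivWithinAt Q A (Icc 0 T) s := fun s => by
    have h := ((hasDerivAt_id s).smul_const A).const_add P₀⁻¹
    rw [one_smul] at h
    exact h.hasDerivWithinAt
  have hPc : ContinuousOn P (Icc 0 T) := fun s hs => (hP s hs).continuousWithinAt
  have hf : ∀ s ∈ Icc 0 T, HasDerivWithinAt (fun s => Q s * P s - 1)
      (mulCLM.flip (-(A * P s)) (Q s * P s - 1)) (Icc 0 T) s := fun s hs => by
    have heq : A * P s + Q s * -(P s * A * P s) = (Q s * P s - 1) * -(A * P s) := by
      simp only [Matrix.mul_assoc]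
      noncomm_ring
    have h := ((hQ s).matrix_mul (hP s hs)).sub_const 1
    rw [heq] at h
    exact h
  have hcont : ContinuousOn
      (fun s => (mulCLM : Matrix n n ℝ →L[ℝ] _ →L[ℝ] _).flip (-(A * P s))) (Icc 0 T) :=
    (ContinuousLinearMap.continuous _).comp_continuousOn (continuousOn_const.mul hPc).neg
  have hinit : Q 0 * P 0 - 1 = 0 := by simp [Q, h0, Matrix.nonsing_inv_mul P₀ hP₀]
  have hQP : Q t * P t - 1 = 0 := eqOn_zero_of_linear_ODE hcont hf hinit ht
  exact (Matrix.inv_eq_right_inv (sub_eq_zero.1 hQP)).symm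

theorem stmt_4_general {N L : ℕ}
    (Pb : Matrix (Fin N) (Fin N) ℝ) (H : Matrix (Fin L) (Fin N) ℝ)
    (R : Matrix (Fin L) (Fin L) ℝ)
    (hPb : Pb.PosDef)
    (P : ℝ → Matrix (Fin N) (Fin N) ℝ)
    (hP : ∀ s ∈ Set.Icc (0:ℝ) 1,
      HasDerivWithinAt P (-(P s * Hᵀ * R⁻¹ * H * P s)) (Set.Icc 0 1) s)
    (hP0 : P 0 = Pb) :
    P 1 = (Pb⁻¹ + Hᵀ * R⁻¹ * H)⁻¹ := by
  have hriccati : ∀ s ∈ Icc (0:ℝ) 1,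
      HasDerivWithinAt P (-(P s * (Hᵀ * R⁻¹ * H) * P s)) (Icc 0 1) s := by
    simpa only [Matrix.mul_assoc] using hP
  simpa using Matrix.riccati_eq_inv_add_smul ((Matrix.isUnit_iff_isUnit_det _).1 hPb.isUnit)
    hriccati hP0 (right_mem_Icc.2 zero_le_one)

/-- If `P^b` is positive definite, any solution of the Riccati ODE
`dP/ds = − P Hᵀ R⁻¹ H P` on `[0,1]` with `P(0) = P^b` satisfies, at pseudo-time `s = 1`,
`P(1) = ((P^b)⁻¹ + Hᵀ R⁻¹ H)⁻¹`, the discrete Kalman filter analysis covariance. -/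
theorem stmt_4 {N L : ℕ}
    (Pb : Matrix (Fin N) (Fin N) ℝ) (H : Matrix (Fin L) (Fin N) ℝ)
    (R : Matrix (Fin L) (Fin L) ℝ)
    (hPb : Pb.PosDef) (hR : R.PosDef)
    (P : ℝ → Matrix (Fin N) (Fin N) ℝ)
    (hP : ∀ s ∈ Set.Icc (0:ℝ) 1,
      HasDerivWithinAt P (-(P s * Hᵀ * R⁻¹ * H * P s)) (Set.Icc 0 1) s)
    (hP0 : P 0 = Pb) :
    P 1 = (Pb⁻¹ + Hᵀ * R⁻¹ * H)⁻¹ :=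
  stmt_4_general Pb H R hPb P hP hP0
end

section
/- Let P(s) := P^b · (s·Hᵀ R⁻¹ H P^b + I)⁻¹ and let x̂^b ∈ ℝᴺ and y ∈ ℝᴸ. Define x̂(s) := x̂^b − s·P(s)·Hᵀ R⁻¹ (H x̂^b − y). Then x̂ is differentiable, satisfies the Kalman–Bucy mean equation dx̂/ds = − P(s) Hᵀ R⁻¹ (H x̂(s) − y) with initial condition x̂(0) = x̂^b, and at s = 1 satisfies x̂(1) = x̂^b − P(1) Hᵀ R⁻¹ (H x̂^b − y), the discrete Kalman filter analysis mean. -/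
/-!
Write `M(s) = s • B P^b + 1` with `B = Hᵀ R⁻¹ H ⪰ 0`, so that `P(s) = P^b M(s)⁻¹` and
`x̂(s) = x̂^b - P^b (s M(s)⁻¹) Hᵀ R⁻¹ (H x̂^b - y)`. The resolvent identity
`s M(s)⁻¹ - t M(t)⁻¹ = (s - t) M(s)⁻¹ M(t)⁻¹` shows `d/ds (s M(s)⁻¹) = M(s)⁻²`, and
`M(s)⁻¹ - s M(s)⁻¹ B P^b M(s)⁻¹ = M(s)⁻²` identifies this derivative with the Kalman–Bucy
right-hand side. `M(s)` is invertible for `s ≥ 0` because `det (1 + sB P^b) = det (1 + S sB S)`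
for `S = √P^b`, and `1 + S sB S` is positive definite.
-/

open Matrix

variable {n : Type*} [Fintype n] [DecidableEq n]

open scoped MatrixOrder ComplexOrder in
theorem Matrix.isUnit_det_mul_add_one_of_posSemidef {𝕜 : Type*} [RCLike 𝕜]
    {A B : Matrix n n 𝕜} (hA : A.PosSemidef) (hB : B.PosSemidef) : IsUnit (A * B + 1).det := by
  set S := CFC.sqrt B
  have hS : Sᴴ = S := (CFC.sqrt_nonneg B).posSemidef.1
  have hSS : S * S = B := CFC.sqrt_mul_sqrt_self B hB.nonneg
  have hpos : (Sᴴ * A * S + 1).PosDef :=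
    PosDef.posSemidef_add (hA.conjTranspose_mul_mul_same S) PosDef.one
  rw [hS] at hpos
  rw [← hSS, ← Matrix.mul_assoc, det_mul_add_one_comm, ← Matrix.mul_assoc]
  exact (isUnit_iff_isUnit_det _).mp hpos.isUnit

section Resolvent

variable {K : Type*} [Field K] (A : Matrix n n K) {s t : K}

theorem Matrix.smul_inv_sub_smul_inv (hs : IsUnit (s • A + 1).det)
    (ht : IsUnit (t • A + 1).det) :
    s • (s • A + 1)⁻¹ - t • (t • A + 1)⁻¹ = (s - t) • ((s • A + 1)⁻¹ * (t • A + 1)⁻¹) := by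
  have hdiff : s • (t • A + 1) - t • (s • A + 1) = (s - t) • (1 : Matrix n n K) := by module
  calc s • (s • A + 1)⁻¹ - t • (t • A + 1)⁻¹
      = (s • A + 1)⁻¹ * (s • (t • A + 1) - t • (s • A + 1)) * (t • A + 1)⁻¹ := by
        rw [Matrix.mul_sub, Matrix.sub_mul, Matrix.mul_smul, Matrix.mul_smul, Matrix.smul_mul,
          Matrix.smul_mul, Matrix.mul_assoc, mul_nonsing_inv _ ht, nonsing_inv_mul _ hs,
          Matrix.mul_one, Matrix.one_mul]
    _ = (s - t) • ((s • A + 1)⁻¹ * (t • A + 1)⁻¹) := by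
        rw [hdiff, Matrix.mul_smul, Matrix.mul_one, Matrix.smul_mul]

theorem Matrix.inv_sub_smul_inv_mul_inv (hs : IsUnit (s • A + 1).det) :
    (s • A + 1)⁻¹ - s • ((s • A + 1)⁻¹ * A * (s • A + 1)⁻¹)
      = (s • A + 1)⁻¹ * (s • A + 1)⁻¹ := by
  calc (s • A + 1)⁻¹ - s • ((s • A + 1)⁻¹ * A * (s • A + 1)⁻¹)
      = (s • A + 1)⁻¹ * ((s • A + 1 - s • A) * (s • A + 1)⁻¹) := by
        rw [Matrix.sub_mul, Matrix.mul_sub, mul_nonsing_inv _ hs, Matrix.smul_mul,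
          Matrix.mul_smul, Matrix.mul_one, Matrix.mul_assoc]
    _ = (s • A + 1)⁻¹ * (s • A + 1)⁻¹ := by rw [add_sub_cancel_left, Matrix.one_mul]

end Resolvent

theorem Matrix.mul_inv_mul_mulVec_sub_smul_mul_mulVec {l K : Type*} [Fintype l] [Field K]
    (B : Matrix n n K) (G : Matrix n l K) (H : Matrix l n K) {s : K}
    (hs : IsUnit (s • (G * H * B) + 1).det) (d : l → K) :
    (B * (s • (G * H * B) + 1)⁻¹ * G) *ᵥ
        (d - s • ((H * (B * (s • (G * H * B) + 1)⁻¹ * G)) *ᵥ d))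
      = B *ᵥ (((s • (G * H * B) + 1)⁻¹ * (s • (G * H * B) + 1)⁻¹) *ᵥ (G *ᵥ d)) := by
  rw [← inv_sub_smul_inv_mul_inv _ hs, mulVec_sub, mulVec_smul, mulVec_mulVec]
  simp only [mulVec_mulVec, ← smul_mulVec, ← sub_mulVec, Matrix.mul_sub, Matrix.sub_mul,
    Matrix.mul_smul, Matrix.smul_mul, Matrix.mul_assoc]

theorem Matrix.hasDerivAt_smul_inv_smul_add_one_mulVec {𝕜 : Type*} [NontriviallyNormedField 𝕜]
    (A : Matrix n n 𝕜) (v : n → 𝕜) {t : 𝕜} (ht : IsUnit (t • A + 1).det) :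
    HasDerivAt (fun s => (s • (s • A + 1)⁻¹) *ᵥ v)
      (((t • A + 1)⁻¹ * (t • A + 1)⁻¹) *ᵥ v) t := by
  have hM : Continuous fun s : 𝕜 => s • A + 1 := by fun_prop
  have hinv : ContinuousAt (fun s : 𝕜 => (s • A + 1)⁻¹) t :=
    (continuousAt_matrix_inv _ (NormedRing.inverse_continuousAt ht.unit)).comp
      (f := fun s => s • A + 1) hM.continuousAt
  have hunit : ∀ᶠ s in nhds t, IsUnit (s • A + 1).det := by
    simp only [isUnit_iff_ne_zero] at ht ⊢
    exact hM.matrix_det.continuousAt.eventually_ne ht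
  have hlim : Filter.Tendsto (fun s => ((s • A + 1)⁻¹ * (t • A + 1)⁻¹) *ᵥ v) (nhds t)
      (nhds (((t • A + 1)⁻¹ * (t • A + 1)⁻¹) *ᵥ v)) :=
    (((continuous_id.matrix_mul continuous_const).matrix_mulVec continuous_const).continuousAt.comp
      (f := fun s : 𝕜 => (s • A + 1)⁻¹) hinv).tendsto
  rw [hasDerivAt_iff_tendsto_slope]
  refine (hlim.mono_left nhdsWithin_le_nhds).congr' ?_
  filter_upwards [nhdsWithin_le_nhds hunit, self_mem_nhdsWithin] with s hs hst
  rw [slope_def_module, ← sub_mulVec, smul_inv_sub_smul_inv A hs ht, smul_mulVec, smul_smul,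
    inv_mul_cancel₀ (sub_ne_zero.2 hst), one_smul]

/-- With `P(s) := P^b (s·Hᵀ R⁻¹ H P^b + I)⁻¹` and
`x̂(s) := x̂^b − s·P(s)·Hᵀ R⁻¹ (H x̂^b − y)`, the function `x̂` is differentiable, satisfies
the Kalman–Bucy mean equation `dx̂/ds = − P(s) Hᵀ R⁻¹ (H x̂(s) − y)` on `[0,∞)` with
`x̂(0) = x̂^b`, and `x̂(1) = x̂^b − P(1) Hᵀ R⁻¹ (H x̂^b − y)` is the discrete Kalman filter
analysis mean. -/
theorem stmt_5 {N L : ℕ}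
    (Pb : Matrix (Fin N) (Fin N) ℝ) (H : Matrix (Fin L) (Fin N) ℝ)
    (R : Matrix (Fin L) (Fin L) ℝ)
    (hPb : Pb.PosSemidef) (hR : R.PosDef)
    (xb : Fin N → ℝ) (y : Fin L → ℝ)
    (P : ℝ → Matrix (Fin N) (Fin N) ℝ)
    (hP : ∀ s : ℝ, P s = Pb * (s • (Hᵀ * R⁻¹ * H * Pb) + 1)⁻¹)
    (xhat : ℝ → Fin N → ℝ)
    (hxhat : ∀ s : ℝ, xhat s = xb - s • ((P s * Hᵀ * R⁻¹) *ᵥ (H *ᵥ xb - y))) :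
    (∀ s ∈ Set.Ici (0:ℝ),
      HasDerivWithinAt xhat (-((P s * Hᵀ * R⁻¹) *ᵥ (H *ᵥ xhat s - y))) (Set.Ici 0) s) ∧
    xhat 0 = xb ∧
    xhat 1 = xb - (P 1 * Hᵀ * R⁻¹) *ᵥ (H *ᵥ xb - y) := by
  refine ⟨fun t ht => ?_, by simp [hxhat], by simp [hxhat]⟩
  have hunit : IsUnit (t • (Hᵀ * R⁻¹ * H * Pb) + 1).det := by
    have hB : (Hᵀ * R⁻¹ * H).PosSemidef := by
      simpa using hR.inv.posSemidef.conjTranspose_mul_mul_same H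
    rw [← Matrix.smul_mul]
    exact isUnit_det_mul_add_one_of_posSemidef (hB.smul ht) hPb
  have hgain (s : ℝ) :
      P s * Hᵀ * R⁻¹ = Pb * (s • (Hᵀ * R⁻¹ * H * Pb) + 1)⁻¹ * (Hᵀ * R⁻¹) := by
    rw [hP, Matrix.mul_assoc]
  have hxhat_eq : xhat = fun s => xb - Pb *ᵥ ((s • (s • (Hᵀ * R⁻¹ * H * Pb) + 1)⁻¹) *ᵥ
      ((Hᵀ * R⁻¹) *ᵥ (H *ᵥ xb - y))) := by
    funext s
    simp only [hxhat, hgain, mulVec_mulVec, ← smul_mulVec, Matrix.mul_smul, Matrix.smul_mul,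
      Matrix.mul_assoc]
  have hderiv := (Pb.mulVecLin.toContinuousLinearMap.hasFDerivAt.comp_hasDerivAt t
    (hasDerivAt_smul_inv_smul_add_one_mulVec _ ((Hᵀ * R⁻¹) *ᵥ (H *ᵥ xb - y)) hunit)).const_sub xb
  have hresidual : H *ᵥ xhat t - y
      = (H *ᵥ xb - y) - t • ((H * (P t * Hᵀ * R⁻¹)) *ᵥ (H *ᵥ xb - y)) := by
    rw [hxhat, mulVec_sub, mulVec_smul, sub_right_comm, mulVec_mulVec]
  rw [hresidual, hgain, mul_inv_mul_mulVec_sub_smul_mul_mulVec _ _ _ hunit, hxhat_eq]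
  exact hderiv.hasDerivWithinAt
end

section
/- Let X : [0,1] → ℝ^{N×M} be a differentiable solution of the BGR09 perturbation equation dX/ds = − (1/(2(M−1))) · X Xᵀ Hᵀ R⁻¹ H X with X(0)·1 = 0. Then X(s)·1 = 0 for all s ∈ [0,1]; that is, the ensemble perturbations remain mean-zero along the Kalman–Bucy flow. -/
/-!
The vector `y(s) = X(s) 1` satisfies the linear ODE `y' = A(s) y` with the continuous
coefficient `A(s) = -(1/(2(M-1))) X Xᵀ Hᵀ R⁻¹ H`, because the right-hand side of the
perturbation equation has `X(s)` as its right factor. A continuous coefficient is bounded on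
`[0,1]`, so the ODE is uniformly Lipschitz and its only solution with `y(0) = 0` is `y ≡ 0`.
-/

open Matrix Set

attribute [local instance] Matrix.normedAddCommGroup Matrix.normedSpace

theorem eqOn_zero_of_hasDerivWithinAt_clm_apply {E : Type*} [NormedAddCommGroup E]
    [NormedSpace ℝ E] {a b : ℝ} {A : ℝ → E →L[ℝ] E} {y : ℝ → E}
    (hA : ContinuousOn A (Icc a b))
    (hy : ∀ t ∈ Icc a b, HasDerivWithinAt y (A t (y t)) (Icc a b) t) (ha : y a = 0) :
    EqOn y 0 (Icc a b) := by
  obtain ⟨C, hC⟩ := isCompact_Icc.exists_bound_of_continuousOn hA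
  have hLip : ∀ t ∈ Ico a b, LipschitzOnWith C.toNNReal (A t) univ := fun t ht =>
    ((A t).lipschitz.weaken <| NNReal.coe_le_coe.mp <|
      (hC t (Ico_subset_Icc_self ht)).trans C.le_coe_toNNReal).lipschitzOnWith
  have hy' : ∀ t ∈ Ico a b, HasDerivWithinAt y (A t (y t)) (Ici t) t := fun t ht =>
    (hy t (Ico_subset_Icc_self ht)).mono_of_mem_nhdsWithin (Icc_mem_nhdsGE_of_mem ht)
  have hzero : ∀ t ∈ Ico a b, HasDerivWithinAt (fun _ => 0) (A t 0) (Ici t) t := fun t _ => by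
    simpa using hasDerivWithinAt_const t (Ici t) (0 : E)
  exact ODE_solution_unique_of_mem_Icc_right hLip (fun t ht => (hy t ht).continuousWithinAt) hy'
    (fun _ _ => mem_univ _) continuousOn_const hzero (fun _ _ => mem_univ _) ha

theorem Matrix.eqOn_mulVec_zero_of_hasDerivWithinAt_mul {n m : Type*} [Fintype n]
    [Fintype m] {a b : ℝ} {A : ℝ → Matrix n n ℝ} {X : ℝ → Matrix n m ℝ} (hA : ContinuousOn A (Icc a b))
    (hX : ∀ t ∈ Icc a b, HasDerivWithinAt X (A t * X t) (Icc a b) t) {v : m → ℝ}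
    (ha : X a *ᵥ v = 0) : EqOn (fun t => X t *ᵥ v) 0 (Icc a b) := by
  let toCLM : Matrix n n ℝ →ₗ[ℝ] (n → ℝ) →L[ℝ] (n → ℝ) :=
    LinearMap.toContinuousLinearMap.toLinearMap ∘ₗ mulVecBilin ℝ ℝ
  let mulVecRight : Matrix n m ℝ →L[ℝ] (n → ℝ) :=
    LinearMap.toContinuousLinearMap ((mulVecBilin ℝ ℝ).flip v)
  refine eqOn_zero_of_hasDerivWithinAt_clm_apply (A := fun t => toCLM (A t))
    (toCLM.continuous_of_finiteDimensional.comp_continuousOn hA) (fun t ht => ?_) ha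
  have hderiv := mulVecRight.hasFDerivAt.comp_hasDerivWithinAt t (hX t ht)
  have hmul : mulVecRight (A t * X t) = A t *ᵥ (X t *ᵥ v) := (mulVec_mulVec _ _ _).symm
  exact hderiv.congr_deriv hmul

theorem stmt_9_general {N L M : ℕ}
    (H : Matrix (Fin L) (Fin N) ℝ) (R : Matrix (Fin L) (Fin L) ℝ)
    (one : Fin M → ℝ)
    (X : ℝ → Matrix (Fin N) (Fin M) ℝ)
    (hX : ∀ s ∈ Set.Icc (0:ℝ) 1,
      HasDerivWithinAt X
        (-(1 / (2 * ((M : ℝ) - 1))) • (X s * (X s)ᵀ * Hᵀ * R⁻¹ * H * X s))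
        (Set.Icc 0 1) s)
    (h0 : X 0 *ᵥ one = 0) :
    ∀ s ∈ Set.Icc (0:ℝ) 1, X s *ᵥ one = 0 := by
  set c : ℝ := -(1 / (2 * ((M : ℝ) - 1)))
  have hXcont : ContinuousOn X (Icc 0 1) := fun t ht => (hX t ht).continuousWithinAt
  have hcoeff : Continuous fun B : Matrix (Fin N) (Fin M) ℝ => c • (B * Bᵀ * Hᵀ * R⁻¹ * H) := by
    fun_prop
  refine fun s hs => Matrix.eqOn_mulVec_zero_of_hasDerivWithinAt_mul
    (hcoeff.comp_continuousOn hXcont) (fun t ht => ?_) h0 hs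
  simpa only [Function.comp_apply, smul_mul] using hX t ht

/-- If `X : [0,1] → ℝ^{N×M}` is a differentiable solution of the BGR09 perturbation
equation `dX/ds = −(1/(2(M−1))) X Xᵀ Hᵀ R⁻¹ H X` with `X(0)·1 = 0`, then `X(s)·1 = 0`
for all `s ∈ [0,1]`: the ensemble perturbations remain mean-zero along the flow. -/
theorem stmt_9 {N L M : ℕ} (hM : 2 ≤ M)
    (H : Matrix (Fin L) (Fin N) ℝ) (R : Matrix (Fin L) (Fin L) ℝ) (hR : R.PosDef)
    (one : Fin M → ℝ) (hone : one = fun _ => 1)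
    (X : ℝ → Matrix (Fin N) (Fin M) ℝ)
    (hX : ∀ s ∈ Set.Icc (0:ℝ) 1,
      HasDerivWithinAt X
        (-(1 / (2 * ((M : ℝ) - 1))) • (X s * (X s)ᵀ * Hᵀ * R⁻¹ * H * X s))
        (Set.Icc 0 1) s)
    (h0 : X 0 *ᵥ one = 0) :
    ∀ s ∈ Set.Icc (0:ℝ) 1, X s *ᵥ one = 0 :=
  stmt_9_general H R one X hX h0
end

section
/- Let X : [0,1] → ℝ^{N×M} and x̄ : [0,1] → ℝᴺ be differentiable, with X(s)·1 = 0 for all s, X satisfying dX/ds = − (1/(2(M−1))) X Xᵀ Hᵀ R⁻¹ H X and x̄ satisfying dx̄/ds = − (1/(M−1)) X Xᵀ Hᵀ R⁻¹ (H x̄ − y). Define X̄(s) := X(s) + x̄(s)·1ᵀ. Then X̄(I − U) = X, M⁻¹ X̄ 1 = x̄, and X̄ satisfies the BR10 ensemble equation dX̄/ds = − (1/(M−1)) · X̄ (I − U) X̄ᵀ Hᵀ R⁻¹ [ (1/2) H X̄ (I + U) − y·1ᵀ ]. -/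
open Matrix

attribute [local instance] Matrix.normedAddCommGroup Matrix.normedSpace

/-!
The ensemble splits as `X̄ = X + x̄ 1ᵀ` with `X 1 = 0`, so right multiplication by the
averaging matrix `U = M⁻¹ 1 1ᵀ` kills `X` and fixes `x̄ 1ᵀ`. Hence `X̄ (I − U) = X`,
`X̄ (I + U) = X + 2 x̄ 1ᵀ` and `X X̄ᵀ = X Xᵀ`, and the BR10 right-hand side collapses to
`−(1/(M−1)) (½ X Xᵀ Hᵀ R⁻¹ H X + X Xᵀ Hᵀ R⁻¹ (H x̄ − y) 1ᵀ)`, which is the derivative of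
`X + x̄ 1ᵀ` given by the two flows.
-/

theorem HasDerivWithinAt.vecMulVec_const {𝕜 m n : Type*} [NontriviallyNormedField 𝕜]
    [CompleteSpace 𝕜] [Fintype m] [Fintype n] {u : 𝕜 → m → 𝕜} {u' : m → 𝕜} {s : Set 𝕜} {t : 𝕜}
    (hu : HasDerivWithinAt u u' s t) (v : n → 𝕜) :
    HasDerivWithinAt (fun t => vecMulVec (u t) v) (vecMulVec u' v) s t :=
  ((LinearMap.toContinuousLinearMap ((vecMulVecBilin 𝕜 𝕜).flip v)).hasFDerivAt
    |>.comp_hasDerivWithinAt t hu :)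

namespace Matrix

variable {K l n ι : Type*} [Field K] [Fintype ι] {X : Matrix n ι K}

theorem add_vecMulVec_one_mulVec_one (hX : X *ᵥ 1 = 0) (x : n → K) :
    (X + vecMulVec x 1) *ᵥ 1 = (Fintype.card ι : K) • x := by
  rw [add_mulVec, hX, vecMulVec_mulVec, zero_add, op_smul_eq_smul, dotProduct_one]
  simp

theorem mul_transpose_add_vecMulVec_one (hX : X *ᵥ 1 = 0) (x : n → K) :
    X * (X + vecMulVec x 1)ᵀ = X * Xᵀ := by
  rw [transpose_add, transpose_vecMulVec, Matrix.mul_add, mul_vecMulVec, hX, zero_vecMulVec,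
    add_zero]

variable [CharZero K] [Nonempty ι] {U : Matrix ι ι K}

theorem inv_card_smul_add_vecMulVec_one_mulVec_one (hX : X *ᵥ 1 = 0)
    (x : n → K) : (Fintype.card ι : K)⁻¹ • ((X + vecMulVec x 1) *ᵥ 1) = x := by
  rw [add_vecMulVec_one_mulVec_one hX, smul_smul, inv_mul_cancel₀ (by simp), one_smul]

theorem add_vecMulVec_one_mul_averaging (hX : X *ᵥ 1 = 0)
    (hU : U = (Fintype.card ι : K)⁻¹ • vecMulVec 1 1) (x : n → K) :
    (X + vecMulVec x 1) * U = vecMulVec x 1 := by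
  rw [hU, Matrix.mul_smul, mul_vecMulVec, add_vecMulVec_one_mulVec_one hX, smul_vecMulVec,
    smul_smul, inv_mul_cancel₀ (by simp), one_smul]

variable [DecidableEq ι]

theorem add_vecMulVec_one_mul_one_sub (hX : X *ᵥ 1 = 0)
    (hU : U = (Fintype.card ι : K)⁻¹ • vecMulVec 1 1) (x : n → K) :
    (X + vecMulVec x 1) * (1 - U) = X := by
  rw [Matrix.mul_sub, Matrix.mul_one, add_vecMulVec_one_mul_averaging hX hU, add_sub_cancel_right]

theorem add_vecMulVec_one_mul_one_add (hX : X *ᵥ 1 = 0)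
    (hU : U = (Fintype.card ι : K)⁻¹ • vecMulVec 1 1) (x : n → K) :
    (X + vecMulVec x 1) * (1 + U) = X + (2 : K) • vecMulVec x 1 := by
  rw [Matrix.mul_add, Matrix.mul_one, add_vecMulVec_one_mul_averaging hX hU, two_smul, add_assoc]

theorem br10_rhs_eq [Fintype n] [Fintype l] (hX : X *ᵥ 1 = 0)
    (hU : U = (Fintype.card ι : K)⁻¹ • vecMulVec 1 1)
    (H : Matrix l n K) (S : Matrix l l K) (x : n → K) (y : l → K) :
    (X + vecMulVec x 1) * (1 - U) * (X + vecMulVec x 1)ᵀ * Hᵀ * S *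
        ((1 / 2 : K) • (H * (X + vecMulVec x 1) * (1 + U)) - vecMulVec y 1) =
      (1 / 2 : K) • (X * Xᵀ * Hᵀ * S * H * X) +
        vecMulVec ((X * Xᵀ * Hᵀ * S) *ᵥ (H *ᵥ x - y)) 1 := by
  have hbracket : (1 / 2 : K) • (H * (X + vecMulVec x 1) * (1 + U)) - vecMulVec y 1 =
      (1 / 2 : K) • (H * X) + vecMulVec (H *ᵥ x - y) 1 := by
    rw [Matrix.mul_assoc, add_vecMulVec_one_mul_one_add hX hU, Matrix.mul_add, Matrix.mul_smul,
      mul_vecMulVec, smul_add, smul_smul, sub_vecMulVec]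
    norm_num
    abel
  rw [add_vecMulVec_one_mul_one_sub hX hU, mul_transpose_add_vecMulVec_one hX, hbracket,
    Matrix.mul_add, Matrix.mul_smul, mul_vecMulVec, Matrix.mul_assoc _ H X]

end Matrix

theorem stmt_10_general {N L M : ℕ} (hM : 2 ≤ M)
    (H : Matrix (Fin L) (Fin N) ℝ) (R : Matrix (Fin L) (Fin L) ℝ)
    (y : Fin L → ℝ)
    (one : Fin M → ℝ) (hone : one = fun _ => 1)
    (U : Matrix (Fin M) (Fin M) ℝ) (hU : U = (M : ℝ)⁻¹ • vecMulVec one one)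
    (X : ℝ → Matrix (Fin N) (Fin M) ℝ) (xbar : ℝ → Fin N → ℝ)
    (hzero : ∀ s ∈ Set.Icc (0:ℝ) 1, X s *ᵥ one = 0)
    (hX : ∀ s ∈ Set.Icc (0:ℝ) 1,
      HasDerivWithinAt X
        (-(1 / (2 * ((M : ℝ) - 1))) • (X s * (X s)ᵀ * Hᵀ * R⁻¹ * H * X s))
        (Set.Icc 0 1) s)
    (hxbar : ∀ s ∈ Set.Icc (0:ℝ) 1,
      HasDerivWithinAt xbar
        (-(1 / ((M : ℝ) - 1)) • ((X s * (X s)ᵀ * Hᵀ * R⁻¹) *ᵥ (H *ᵥ xbar s - y)))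
        (Set.Icc 0 1) s)
    (Xbar : ℝ → Matrix (Fin N) (Fin M) ℝ)
    (hXbar : ∀ s : ℝ, Xbar s = X s + vecMulVec (xbar s) one) :
    (∀ s ∈ Set.Icc (0:ℝ) 1, Xbar s * (1 - U) = X s) ∧
    (∀ s ∈ Set.Icc (0:ℝ) 1, (M : ℝ)⁻¹ • (Xbar s *ᵥ one) = xbar s) ∧
    (∀ s ∈ Set.Icc (0:ℝ) 1,
      HasDerivWithinAt Xbar
        (-(1 / ((M : ℝ) - 1)) • (Xbar s * (1 - U) * (Xbar s)ᵀ * Hᵀ * R⁻¹ *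
          ((1 / 2 : ℝ) • (H * Xbar s * (1 + U)) - vecMulVec y one)))
        (Set.Icc 0 1) s) := by
  obtain rfl : one = 1 := hone
  obtain rfl : Xbar = fun s => X s + vecMulVec (xbar s) 1 := funext hXbar
  beta_reduce
  have : Nonempty (Fin M) := Fin.pos_iff_nonempty.mp (by omega)
  have hU' : U = (Fintype.card (Fin M) : ℝ)⁻¹ • vecMulVec 1 1 := by rwa [Fintype.card_fin]
  refine ⟨fun s hs => add_vecMulVec_one_mul_one_sub (hzero s hs) hU' (xbar s),
    fun s hs => ?_, fun s hs => ?_⟩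
  · simpa only [Fintype.card_fin] using
      inv_card_smul_add_vecMulVec_one_mulVec_one (hzero s hs) (xbar s)
  · rw [br10_rhs_eq (hzero s hs) hU']
    refine ((hX s hs).add ((hxbar s hs).vecMulVec_const 1)).congr_deriv ?_
    rw [smul_add, smul_smul, smul_vecMulVec, neg_mul, one_div_mul_one_div, mul_comm (M - 1 : ℝ)]

/-- If `X` (mean-zero perturbations) solves `dX/ds = −(1/(2(M−1))) X Xᵀ Hᵀ R⁻¹ H X` and
`x̄` (the mean) solves `dx̄/ds = −(1/(M−1)) X Xᵀ Hᵀ R⁻¹ (H x̄ − y)`, then the full ensemble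
`X̄(s) := X(s) + x̄(s)·1ᵀ` satisfies `X̄(I−U) = X`, `M⁻¹ X̄ 1 = x̄`, and the BR10 equation
`dX̄/ds = −(1/(M−1)) X̄ (I−U) X̄ᵀ Hᵀ R⁻¹ [ (1/2) H X̄ (I+U) − y·1ᵀ ]`. -/
theorem stmt_10 {N L M : ℕ} (hM : 2 ≤ M)
    (H : Matrix (Fin L) (Fin N) ℝ) (R : Matrix (Fin L) (Fin L) ℝ) (hR : R.PosDef)
    (y : Fin L → ℝ)
    (one : Fin M → ℝ) (hone : one = fun _ => 1)
    (U : Matrix (Fin M) (Fin M) ℝ) (hU : U = (M : ℝ)⁻¹ • vecMulVec one one)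
    (X : ℝ → Matrix (Fin N) (Fin M) ℝ) (xbar : ℝ → Fin N → ℝ)
    (hzero : ∀ s ∈ Set.Icc (0:ℝ) 1, X s *ᵥ one = 0)
    (hX : ∀ s ∈ Set.Icc (0:ℝ) 1,
      HasDerivWithinAt X
        (-(1 / (2 * ((M : ℝ) - 1))) • (X s * (X s)ᵀ * Hᵀ * R⁻¹ * H * X s))
        (Set.Icc 0 1) s)
    (hxbar : ∀ s ∈ Set.Icc (0:ℝ) 1,
      HasDerivWithinAt xbar
        (-(1 / ((M : ℝ) - 1)) • ((X s * (X s)ᵀ * Hᵀ * R⁻¹) *ᵥ (H *ᵥ xbar s - y)))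
        (Set.Icc 0 1) s)
    (Xbar : ℝ → Matrix (Fin N) (Fin M) ℝ)
    (hXbar : ∀ s : ℝ, Xbar s = X s + vecMulVec (xbar s) one) :
    (∀ s ∈ Set.Icc (0:ℝ) 1, Xbar s * (1 - U) = X s) ∧
    (∀ s ∈ Set.Icc (0:ℝ) 1, (M : ℝ)⁻¹ • (Xbar s *ᵥ one) = xbar s) ∧
    (∀ s ∈ Set.Icc (0:ℝ) 1,
      HasDerivWithinAt Xbar
        (-(1 / ((M : ℝ) - 1)) • (Xbar s * (1 - U) * (Xbar s)ᵀ * Hᵀ * R⁻¹ *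
          ((1 / 2 : ℝ) • (H * Xbar s * (1 + U)) - vecMulVec y one)))
        (Set.Icc 0 1) s) :=
  stmt_10_general hM H R y one hone U hU X xbar hzero hX hxbar Xbar hXbar
end

section
/- Let X̄ : [0,1] → ℝ^{N×M} be a differentiable solution of the BR10 ensemble equation dX̄/ds = − (1/(M−1)) · X̄ (I − U) X̄ᵀ Hᵀ R⁻¹ [ (1/2) H X̄ (I + U) − y·1ᵀ ]. Then X(s) := X̄(s)(I − U) satisfies the perturbation equation dX/ds = − (1/(2(M−1))) X Xᵀ Hᵀ R⁻¹ H X, and x̄(s) := M⁻¹ X̄(s) 1 satisfies the mean equation dx̄/ds = − (1/(M−1)) X Xᵀ Hᵀ R⁻¹ (H x̄ − y). -/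
/-!
`U` is the orthogonal projection onto the constant vectors, so `P := I − U` is a symmetric
idempotent with `(I + U) P = P` and `y 1ᵀ P = 0`. Multiplying the BR10 field on the right by `P`
therefore turns `X̄ P X̄ᵀ` into `X Xᵀ` and the bracket into `½ H X`, while applying it to `M⁻¹ 1`
turns the bracket into `H x̄ − y`. Both operations are linear, so they commute with `d/ds`.
-/

open Matrix

attribute [local instance] Matrix.normedAddCommGroup Matrix.normedSpace

section Derivatives

variable {E F : Type*} [NormedAddCommGroup E] [NormedSpace ℝ E] [FiniteDimensional ℝ E]
  [NormedAddCommGroup F] [NormedSpace ℝ F] {f : ℝ → E} {f' : E} {s : Set ℝ} {x : ℝ}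

theorem HasDerivWithinAt.linearMap_comp (L : E →ₗ[ℝ] F) (hf : HasDerivWithinAt f f' s x) :
    HasDerivWithinAt (fun t => L (f t)) (L f') s x :=
  (LinearMap.toContinuousLinearMap L).hasFDerivAt.comp_hasDerivWithinAt x hf

variable {l m n : Type*} [Fintype l] [Fintype m] [Fintype n]

theorem HasDerivWithinAt.matrix_mul_const {A : ℝ → Matrix l m ℝ} {A' : Matrix l m ℝ}
    (hA : HasDerivWithinAt A A' s x) (C : Matrix m n ℝ) :
    HasDerivWithinAt (fun t => A t * C) (A' * C) s x :=
  hA.linearMap_comp (mulRightLinearMap l ℝ C)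

theorem HasDerivWithinAt.matrix_mulVec_const {A : ℝ → Matrix l m ℝ} {A' : Matrix l m ℝ}
    (hA : HasDerivWithinAt A A' s x) (v : m → ℝ) :
    HasDerivWithinAt (fun t => A t *ᵥ v) (A' *ᵥ v) s x :=
  hA.linearMap_comp ((mulVecBilin ℝ ℝ).flip v)

end Derivatives

section Averaging

variable {ι κ : Type*} [Fintype ι]

variable (ι) in
noncomputable def averagingMatrix : Matrix ι ι ℝ :=
  (Fintype.card ι : ℝ)⁻¹ • vecMulVec 1 1

local notation "U" => averagingMatrix ι

theorem transpose_averagingMatrix : (U)ᵀ = U := by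
  rw [averagingMatrix, transpose_smul, transpose_vecMulVec]

theorem vecMulVec_one_mulVec_one (y : κ → ℝ) :
    vecMulVec y (1 : ι → ℝ) *ᵥ 1 = (Fintype.card ι : ℝ) • y := by
  rw [vecMulVec_mulVec, one_dotProduct_one, op_smul_eq_smul]

variable [Nonempty ι]

theorem averagingMatrix_mulVec_one : U *ᵥ 1 = 1 := by
  rw [averagingMatrix, smul_mulVec, vecMulVec_one_mulVec_one, smul_smul,
    inv_mul_cancel₀ (by positivity), one_smul]

theorem vecMulVec_one_mul_averagingMatrix (y : κ → ℝ) :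
    vecMulVec y (1 : ι → ℝ) * U = vecMulVec y 1 := by
  rw [averagingMatrix, Matrix.mul_smul, vecMulVec_mul_vecMulVec, one_dotProduct_one,
    vecMulVec_smul, smul_smul, inv_mul_cancel₀ (by positivity), one_smul]

theorem averagingMatrix_mul_self : U * U = U := by
  nth_rw 1 [averagingMatrix]
  rw [Matrix.smul_mul, vecMulVec_one_mul_averagingMatrix, averagingMatrix]

variable [DecidableEq ι]

theorem one_sub_averagingMatrix_mul_self : (1 - U) * (1 - U) = 1 - U := by
  simp only [Matrix.mul_sub, Matrix.sub_mul, Matrix.mul_one, Matrix.one_mul,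
    averagingMatrix_mul_self]
  abel

theorem one_add_averagingMatrix_mul_one_sub : (1 + U) * (1 - U) = 1 - U := by
  simp only [Matrix.add_mul, Matrix.mul_sub, Matrix.mul_one, Matrix.one_mul,
    averagingMatrix_mul_self]
  abel

theorem vecMulVec_one_mul_one_sub_averagingMatrix (y : κ → ℝ) :
    vecMulVec y (1 : ι → ℝ) * (1 - U) = 0 := by
  rw [Matrix.mul_sub, Matrix.mul_one, vecMulVec_one_mul_averagingMatrix, sub_self]

theorem mul_one_sub_averagingMatrix_mul_transpose {κ' : Type*} (A : Matrix κ ι ℝ)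
    (B : Matrix κ' ι ℝ) : A * (1 - U) * Bᵀ = A * (1 - U) * (B * (1 - U))ᵀ := by
  rw [transpose_mul, transpose_sub, transpose_one, transpose_averagingMatrix,
    ← Matrix.mul_assoc, Matrix.mul_assoc A (1 - U) (1 - U), one_sub_averagingMatrix_mul_self]

end Averaging

section Innovation

variable {ι κ n : Type*} [Fintype ι] [Nonempty ι] [DecidableEq ι] [Fintype n]

local notation "U" => averagingMatrix ι

theorem innovation_mul_one_sub_averagingMatrix (H : Matrix κ n ℝ) (Xb : Matrix n ι ℝ)
    (y : κ → ℝ) :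
    ((1 / 2 : ℝ) • (H * Xb * (1 + U)) - vecMulVec y 1) * (1 - U) =
      (1 / 2 : ℝ) • (H * (Xb * (1 - U))) := by
  rw [Matrix.sub_mul, Matrix.smul_mul, Matrix.mul_assoc (H * Xb),
    one_add_averagingMatrix_mul_one_sub, vecMulVec_one_mul_one_sub_averagingMatrix, sub_zero,
    Matrix.mul_assoc]

theorem innovation_mulVec_one (H : Matrix κ n ℝ) (Xb : Matrix n ι ℝ) (y : κ → ℝ) :
    ((1 / 2 : ℝ) • (H * Xb * (1 + U)) - vecMulVec y 1) *ᵥ 1 =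
      (Fintype.card ι : ℝ) • (H *ᵥ ((Fintype.card ι : ℝ)⁻¹ • (Xb *ᵥ 1)) - y) := by
  rw [sub_mulVec, smul_mulVec, vecMulVec_one_mulVec_one, ← mulVec_mulVec, add_mulVec, one_mulVec,
    averagingMatrix_mulVec_one, ← two_smul ℝ (1 : ι → ℝ), mulVec_smul, mulVec_smul, smul_sub,
    smul_smul, smul_smul, mul_inv_cancel₀ (by positivity), one_smul, mulVec_mulVec]
  norm_num

end Innovation

theorem stmt_11_general {N L M : ℕ} (hM : 2 ≤ M)
    (H : Matrix (Fin L) (Fin N) ℝ) (R : Matrix (Fin L) (Fin L) ℝ)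
    (y : Fin L → ℝ)
    (one : Fin M → ℝ) (hone : one = fun _ => 1)
    (U : Matrix (Fin M) (Fin M) ℝ) (hU : U = (M : ℝ)⁻¹ • vecMulVec one one)
    (Xbar : ℝ → Matrix (Fin N) (Fin M) ℝ)
    (hXbar : ∀ s ∈ Set.Icc (0:ℝ) 1,
      HasDerivWithinAt Xbar
        (-(1 / ((M : ℝ) - 1)) • (Xbar s * (1 - U) * (Xbar s)ᵀ * Hᵀ * R⁻¹ *
          ((1 / 2 : ℝ) • (H * Xbar s * (1 + U)) - vecMulVec y one)))
        (Set.Icc 0 1) s)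
    (X : ℝ → Matrix (Fin N) (Fin M) ℝ) (hX : ∀ s : ℝ, X s = Xbar s * (1 - U))
    (xbar : ℝ → Fin N → ℝ) (hxbar : ∀ s : ℝ, xbar s = (M : ℝ)⁻¹ • (Xbar s *ᵥ one)) :
    (∀ s ∈ Set.Icc (0:ℝ) 1,
      HasDerivWithinAt X
        (-(1 / (2 * ((M : ℝ) - 1))) • (X s * (X s)ᵀ * Hᵀ * R⁻¹ * H * X s))
        (Set.Icc 0 1) s) ∧
    (∀ s ∈ Set.Icc (0:ℝ) 1,
      HasDerivWithinAt xbar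
        (-(1 / ((M : ℝ) - 1)) • ((X s * (X s)ᵀ * Hᵀ * R⁻¹) *ᵥ (H *ᵥ xbar s - y)))
        (Set.Icc 0 1) s) := by
  have : Nonempty (Fin M) := ⟨⟨0, by omega⟩⟩
  obtain rfl : one = 1 := hone
  obtain rfl : U = averagingMatrix (Fin M) := by rw [hU, averagingMatrix, Fintype.card_fin]
  obtain rfl : X = fun t => Xbar t * (1 - averagingMatrix (Fin M)) := funext hX
  obtain rfl : xbar = fun t => (M : ℝ)⁻¹ • (Xbar t *ᵥ 1) := funext hxbar
  refine ⟨fun s hs => ?_, fun s hs => ?_⟩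
  · refine ((hXbar s hs).matrix_mul_const (1 - averagingMatrix (Fin M))).congr_deriv ?_
    rw [Matrix.smul_mul, Matrix.mul_assoc _ _ (1 - _), innovation_mul_one_sub_averagingMatrix,
      mul_one_sub_averagingMatrix_mul_transpose, Matrix.mul_smul, smul_smul, ← Matrix.mul_assoc,
      neg_mul, one_div_mul_one_div, mul_comm _ (2 : ℝ)]
  · refine (((hXbar s hs).matrix_mulVec_const 1).const_smul (M : ℝ)⁻¹).congr_deriv ?_
    rw [smul_mulVec, ← mulVec_mulVec, innovation_mulVec_one, mulVec_smul, smul_smul, smul_smul,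
      mul_one_sub_averagingMatrix_mul_transpose, Fintype.card_fin]
    congr 1
    field_simp

/-- If the full ensemble `X̄` solves the BR10 equation
`dX̄/ds = −(1/(M−1)) X̄ (I−U) X̄ᵀ Hᵀ R⁻¹ [ (1/2) H X̄ (I+U) − y·1ᵀ ]`, then the
perturbations `X := X̄(I−U)` solve `dX/ds = −(1/(2(M−1))) X Xᵀ Hᵀ R⁻¹ H X` and the mean
`x̄ := M⁻¹ X̄ 1` solves `dx̄/ds = −(1/(M−1)) X Xᵀ Hᵀ R⁻¹ (H x̄ − y)`. -/
theorem stmt_11 {N L M : ℕ} (hM : 2 ≤ M)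
    (H : Matrix (Fin L) (Fin N) ℝ) (R : Matrix (Fin L) (Fin L) ℝ) (hR : R.PosDef)
    (y : Fin L → ℝ)
    (one : Fin M → ℝ) (hone : one = fun _ => 1)
    (U : Matrix (Fin M) (Fin M) ℝ) (hU : U = (M : ℝ)⁻¹ • vecMulVec one one)
    (Xbar : ℝ → Matrix (Fin N) (Fin M) ℝ)
    (hXbar : ∀ s ∈ Set.Icc (0:ℝ) 1,
      HasDerivWithinAt Xbar
        (-(1 / ((M : ℝ) - 1)) • (Xbar s * (1 - U) * (Xbar s)ᵀ * Hᵀ * R⁻¹ *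
          ((1 / 2 : ℝ) • (H * Xbar s * (1 + U)) - vecMulVec y one)))
        (Set.Icc 0 1) s)
    (X : ℝ → Matrix (Fin N) (Fin M) ℝ) (hX : ∀ s : ℝ, X s = Xbar s * (1 - U))
    (xbar : ℝ → Fin N → ℝ) (hxbar : ∀ s : ℝ, xbar s = (M : ℝ)⁻¹ • (Xbar s *ᵥ one)) :
    (∀ s ∈ Set.Icc (0:ℝ) 1,
      HasDerivWithinAt X
        (-(1 / (2 * ((M : ℝ) - 1))) • (X s * (X s)ᵀ * Hᵀ * R⁻¹ * H * X s))
        (Set.Icc 0 1) s) ∧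
    (∀ s ∈ Set.Icc (0:ℝ) 1,
      HasDerivWithinAt xbar
        (-(1 / ((M : ℝ) - 1)) • ((X s * (X s)ᵀ * Hᵀ * R⁻¹) *ᵥ (H *ᵥ xbar s - y)))
        (Set.Icc 0 1) s) :=
  stmt_11_general hM H R y one hone U hU Xbar hXbar X hX xbar hxbar
end

section
/- Let X^b ∈ ℝ^{N×M} be a fixed background ensemble of perturbations and Y^b := H X^b. If W : [0,1] → ℝ^{M×M} is a differentiable solution of the ensemble-space (ETKBF) equation dW/ds = − (1/(2(M−1))) · W Wᵀ (Y^b)ᵀ R⁻¹ Y^b W with W(0) = I, then X(s) := X^b W(s) is a solution of the state-space (BGR09) equation dX/ds = − (1/(2(M−1))) X Xᵀ Hᵀ R⁻¹ H X with X(0) = X^b. -/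
open Matrix

attribute [local instance] Matrix.normedAddCommGroup Matrix.normedSpace

set_option maxHeartbeats 1000000 in
/-- If `W` solves the ensemble-space (ETKBF) equation
`dW/ds = −(1/(2(M−1))) W Wᵀ (Y^b)ᵀ R⁻¹ Y^b W` with `W(0) = I`, where `Y^b := H X^b`,
then `X(s) := X^b W(s)` solves the state-space (BGR09) equation
`dX/ds = −(1/(2(M−1))) X Xᵀ Hᵀ R⁻¹ H X` with `X(0) = X^b`. -/
theorem stmt_12 {N L M : ℕ} (hM : 2 ≤ M)
    (H : Matrix (Fin L) (Fin N) ℝ) (R : Matrix (Fin L) (Fin L) ℝ) (hR : R.PosDef)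
    (Xb : Matrix (Fin N) (Fin M) ℝ)
    (Yb : Matrix (Fin L) (Fin M) ℝ) (hYb : Yb = H * Xb)
    (W : ℝ → Matrix (Fin M) (Fin M) ℝ)
    (hW : ∀ s ∈ Set.Icc (0:ℝ) 1,
      HasDerivWithinAt W
        (-(1 / (2 * ((M : ℝ) - 1))) • (W s * (W s)ᵀ * Ybᵀ * R⁻¹ * Yb * W s))
        (Set.Icc 0 1) s)
    (hW0 : W 0 = 1)
    (X : ℝ → Matrix (Fin N) (Fin M) ℝ) (hX : ∀ s : ℝ, X s = Xb * W s) :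
    (∀ s ∈ Set.Icc (0:ℝ) 1,
      HasDerivWithinAt X
        (-(1 / (2 * ((M : ℝ) - 1))) • (X s * (X s)ᵀ * Hᵀ * R⁻¹ * H * X s))
        (Set.Icc 0 1) s) ∧
    X 0 = Xb := by
  set Lm : Matrix (Fin M) (Fin M) ℝ →L[ℝ] Matrix (Fin N) (Fin M) ℝ :=
    LinearMap.toContinuousLinearMap
      ({ toFun := fun A => Xb * A,
         map_add' := fun A B => Matrix.mul_add _ _ _,
         map_smul' := fun c A => (Matrix.mul_smul _ _ _) } :
        Matrix (Fin M) (Fin M) ℝ →ₗ[ℝ] Matrix (Fin N) (Fin M) ℝ) with hLm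
  have hLfun : ∀ s, X s = Lm (W s) := fun s => hX s
  refine ⟨fun s hs => ?_, by rw [hX, hW0, Matrix.mul_one]⟩
  have hd := Lm.hasFDerivAt.comp_hasDerivWithinAt s (hW s hs)
  have key : Lm (-(1 / (2 * ((M : ℝ) - 1))) • (W s * (W s)ᵀ * Ybᵀ * R⁻¹ * Yb * W s))
      = -(1 / (2 * ((M : ℝ) - 1))) • (X s * (X s)ᵀ * Hᵀ * R⁻¹ * H * X s) := by
    have h1 : Lm (-(1 / (2 * ((M : ℝ) - 1))) • (W s * (W s)ᵀ * Ybᵀ * R⁻¹ * Yb * W s))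
        = -(1 / (2 * ((M : ℝ) - 1))) • (Xb * (W s * (W s)ᵀ * Ybᵀ * R⁻¹ * Yb * W s)) := by
      rw [_root_.map_smul]; rfl
    rw [h1, hX, hYb]
    congr 1
    simp only [Matrix.transpose_mul, Matrix.mul_assoc]
  have hfinal : HasDerivWithinAt (fun t => Lm (W t))
      (-(1 / (2 * ((M : ℝ) - 1))) • (X s * (X s)ᵀ * Hᵀ * R⁻¹ * H * X s))
      (Set.Icc 0 1) s := key ▸ hd
  exact hfinal.congr (fun t _ => (hLfun t)) (hLfun s)
end

section
/- Let X̄^b ∈ ℝ^{N×M} be a fixed background ensemble and Ȳ^b := H X̄^b. If W̄ : [0,1] → ℝ^{M×M} is a differentiable solution of the ensemble-space (DETKBF) equation dW̄/ds = − (1/(M−1)) · W̄ (I − U) W̄ᵀ (Ȳ^b)ᵀ R⁻¹ [ (1/2) Ȳ^b W̄ (I + U) − y·1ᵀ ] with W̄(0) = I, then X̄(s) := X̄^b W̄(s) is a solution of the state-space BR10 equation dX̄/ds = − (1/(M−1)) X̄ (I − U) X̄ᵀ Hᵀ R⁻¹ [ (1/2) H X̄ (I + U) − y·1ᵀ ]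 with X̄(0) = X̄^b. -/
open Matrix

attribute [local instance] Matrix.normedAddCommGroup Matrix.normedSpace

/-!
The ensemble-space right-hand side is the state-space (BR10) right-hand side with the
observation operator `H` replaced by `Ȳ^b = H X̄^b`. Left multiplication by `X̄^b` intertwines
the two (`mul_br10Field`), because `(X̄^b W̄)ᵀ Hᵀ = W̄ᵀ (H X̄^b)ᵀ`. Since
`W̄ ↦ X̄^b W̄` is linear, it maps the solution `W̄` to a solution `X̄^b W̄`.
-/

theorem HasDerivWithinAt.matrix_const_mul {𝕜 : Type*} [NontriviallyNormedField 𝕜]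
    [CompleteSpace 𝕜] {l m n : Type*} [Fintype l] [Fintype m] [Fintype n]
    (A : Matrix l m 𝕜) {W : 𝕜 → Matrix m n 𝕜} {W' : Matrix m n 𝕜} {s : Set 𝕜} {t : 𝕜}
    (hW : HasDerivWithinAt W W' s t) :
    HasDerivWithinAt (fun t => A * W t) (A * W') s t :=
  (mulLeftLinearMap n 𝕜 A).toContinuousLinearMap.hasFDerivAt.comp_hasDerivWithinAt t hW

section BR10

variable {𝕜 : Type*} [Field 𝕜] {l m n k : Type*} [Fintype l] [Fintype m] [Fintype n]
  [Fintype k] [DecidableEq l] [DecidableEq m]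

noncomputable def br10Field (c : 𝕜) (H : Matrix l n 𝕜) (R : Matrix l l 𝕜) (y : l → 𝕜)
    (one : m → 𝕜) (U : Matrix m m 𝕜) (X : Matrix n m 𝕜) : Matrix n m 𝕜 :=
  c • (X * (1 - U) * Xᵀ * Hᵀ * R⁻¹ * ((1 / 2 : 𝕜) • (H * X * (1 + U)) - vecMulVec y one))

theorem mul_br10Field (c : 𝕜) (H : Matrix l n 𝕜) (R : Matrix l l 𝕜) (y : l → 𝕜)
    (one : m → 𝕜) (U : Matrix m m 𝕜) (A : Matrix n k 𝕜) (W : Matrix k m 𝕜) :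
    A * br10Field c (H * A) R y one U W = br10Field c H R y one U (A * W) := by
  simp only [br10Field, Matrix.mul_smul, transpose_mul, Matrix.mul_assoc]

end BR10

theorem stmt_13_general {N L M : ℕ}
    (H : Matrix (Fin L) (Fin N) ℝ) (R : Matrix (Fin L) (Fin L) ℝ)
    (y : Fin L → ℝ)
    (one : Fin M → ℝ)
    (U : Matrix (Fin M) (Fin M) ℝ)
    (Xbarb : Matrix (Fin N) (Fin M) ℝ)
    (Ybarb : Matrix (Fin L) (Fin M) ℝ) (hYbarb : Ybarb = H * Xbarb)
    (Wbar : ℝ → Matrix (Fin M) (Fin M) ℝ)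
    (hWbar : ∀ s ∈ Set.Icc (0:ℝ) 1,
      HasDerivWithinAt Wbar
        (-(1 / ((M : ℝ) - 1)) • (Wbar s * (1 - U) * (Wbar s)ᵀ * Ybarbᵀ * R⁻¹ *
          ((1 / 2 : ℝ) • (Ybarb * Wbar s * (1 + U)) - vecMulVec y one)))
        (Set.Icc 0 1) s)
    (hWbar0 : Wbar 0 = 1)
    (Xbar : ℝ → Matrix (Fin N) (Fin M) ℝ) (hXbar : ∀ s : ℝ, Xbar s = Xbarb * Wbar s) :
    (∀ s ∈ Set.Icc (0:ℝ) 1,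
      HasDerivWithinAt Xbar
        (-(1 / ((M : ℝ) - 1)) • (Xbar s * (1 - U) * (Xbar s)ᵀ * Hᵀ * R⁻¹ *
          ((1 / 2 : ℝ) • (H * Xbar s * (1 + U)) - vecMulVec y one)))
        (Set.Icc 0 1) s) ∧
    Xbar 0 = Xbarb := by
  obtain rfl : Xbar = fun s => Xbarb * Wbar s := funext hXbar
  subst hYbarb
  refine ⟨fun s hs => ?_, by simp only [hWbar0, Matrix.mul_one]⟩
  have h := (hWbar s hs).matrix_const_mul Xbarb
  change HasDerivWithinAt _ (Xbarb * br10Field _ (H * Xbarb) R y one U (Wbar s)) _ _ at h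
  rwa [mul_br10Field] at h

/-- If `W̄` solves the ensemble-space (DETKBF) equation
`dW̄/ds = −(1/(M−1)) W̄ (I−U) W̄ᵀ (Ȳ^b)ᵀ R⁻¹ [ (1/2) Ȳ^b W̄ (I+U) − y·1ᵀ ]` with
`W̄(0) = I`, where `Ȳ^b := H X̄^b`, then `X̄(s) := X̄^b W̄(s)` solves the state-space BR10
equation `dX̄/ds = −(1/(M−1)) X̄ (I−U) X̄ᵀ Hᵀ R⁻¹ [ (1/2) H X̄ (I+U) − y·1ᵀ ]` with
`X̄(0) = X̄^b`. -/
theorem stmt_13 {N L M : ℕ} (hM : 2 ≤ M)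
    (H : Matrix (Fin L) (Fin N) ℝ) (R : Matrix (Fin L) (Fin L) ℝ) (hR : R.PosDef)
    (y : Fin L → ℝ)
    (one : Fin M → ℝ) (hone : one = fun _ => 1)
    (U : Matrix (Fin M) (Fin M) ℝ) (hU : U = (M : ℝ)⁻¹ • vecMulVec one one)
    (Xbarb : Matrix (Fin N) (Fin M) ℝ)
    (Ybarb : Matrix (Fin L) (Fin M) ℝ) (hYbarb : Ybarb = H * Xbarb)
    (Wbar : ℝ → Matrix (Fin M) (Fin M) ℝ)
    (hWbar : ∀ s ∈ Set.Icc (0:ℝ) 1,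
      HasDerivWithinAt Wbar
        (-(1 / ((M : ℝ) - 1)) • (Wbar s * (1 - U) * (Wbar s)ᵀ * Ybarbᵀ * R⁻¹ *
          ((1 / 2 : ℝ) • (Ybarb * Wbar s * (1 + U)) - vecMulVec y one)))
        (Set.Icc 0 1) s)
    (hWbar0 : Wbar 0 = 1)
    (Xbar : ℝ → Matrix (Fin N) (Fin M) ℝ) (hXbar : ∀ s : ℝ, Xbar s = Xbarb * Wbar s) :
    (∀ s ∈ Set.Icc (0:ℝ) 1,
      HasDerivWithinAt Xbar
        (-(1 / ((M : ℝ) - 1)) • (Xbar s * (1 - U) * (Xbar s)ᵀ * Hᵀ * R⁻¹ *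
          ((1 / 2 : ℝ) • (H * Xbar s * (1 + U)) - vecMulVec y one)))
        (Set.Icc 0 1) s) ∧
    Xbar 0 = Xbarb :=
  stmt_13_general H R y one U Xbarb Ybarb hYbarb Wbar hWbar hWbar0 Xbar hXbar
end

section
/- If W : [0,1] → ℝ^{M×M} is a differentiable solution of dW/ds = − (1/(2(M−1))) · W Wᵀ S W where S := (Y^b)ᵀ R⁻¹ Y^b is symmetric, then P̃(s) := W(s) W(s)ᵀ / (M−1) satisfies the ensemble-space Riccati equation dP̃/ds = − P̃ S P̃. -/
/-!
Write `P̃ = k • W Wᵀ` with `k = (M - 1)⁻¹`, so that the flow reads `Ẇ = -(k/2) W Wᵀ S W`. By the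
product rule `dP̃/ds = k (Ẇ Wᵀ + W Ẇᵀ)`, and since `S = (Y^b)ᵀ R⁻¹ Y^b` is symmetric both terms
equal `-(k²/2) W Wᵀ S W Wᵀ`; their sum is `-P̃ S P̃`.
-/

open Matrix

attribute [local instance] Matrix.normedAddCommGroup Matrix.normedSpace

theorem Matrix.IsSymm.transpose_mul_mul {m n α : Type*} [Fintype m] [CommSemiring α]
    {B : Matrix m m α} (hB : B.IsSymm) (A : Matrix m n α) : (Aᵀ * B * A).IsSymm := by
  simp [IsSymm, transpose_mul, hB.eq, Matrix.mul_assoc]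

section MatrixCalculus

variable {𝕜 : Type*} [NontriviallyNormedField 𝕜] [CompleteSpace 𝕜]
  {m n p : Type*} [Fintype m] [Fintype n] [Fintype p] {s : Set 𝕜} {x : 𝕜}

theorem HasDerivWithinAt.matrix_mul_s14 {A : 𝕜 → Matrix m n 𝕜} {B : 𝕜 → Matrix n p 𝕜}
    {A' : Matrix m n 𝕜} {B' : Matrix n p 𝕜}
    (hA : HasDerivWithinAt A A' s x) (hB : HasDerivWithinAt B B' s x) :
    HasDerivWithinAt (fun t ↦ A t * B t) (A' * B x + A x * B') s x := by
  let mulCLM : Matrix m n 𝕜 →L[𝕜] Matrix n p 𝕜 →L[𝕜] Matrix m p 𝕜 :=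
    LinearMap.toContinuousLinearMap (LinearMap.toContinuousLinearMap.toLinearMap ∘ₗ
      LinearMap.mk₂ 𝕜 (· * ·) Matrix.add_mul Matrix.smul_mul Matrix.mul_add
        fun c A B ↦ Matrix.mul_smul A c B)
  rw [add_comm]
  exact mulCLM.hasDerivWithinAt_of_bilinear hA hB

theorem HasDerivWithinAt.matrix_transpose {A : 𝕜 → Matrix m n 𝕜} {A' : Matrix m n 𝕜}
    (hA : HasDerivWithinAt A A' s x) :
    HasDerivWithinAt (fun t ↦ (A t)ᵀ) A'ᵀ s x :=
  (LinearMap.toContinuousLinearMap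
    (transposeLinearEquiv m n 𝕜 𝕜).toLinearMap).hasFDerivAt.comp_hasDerivWithinAt x hA

theorem hasDerivWithinAt_smul_mul_transpose_self_riccati [CharZero 𝕜] {W : 𝕜 → Matrix m n 𝕜}
    {S : Matrix m m 𝕜} (hS : S.IsSymm) (k : 𝕜)
    (hW : HasDerivWithinAt W (-(k / 2) • (W x * (W x)ᵀ * S * W x)) s x) :
    HasDerivWithinAt (fun t ↦ k • (W t * (W t)ᵀ))
      (-(k • (W x * (W x)ᵀ) * S * (k • (W x * (W x)ᵀ)))) s x := by
  refine ((hW.matrix_mul_s14 hW.matrix_transpose).const_smul k).congr_deriv ?_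
  simp only [transpose_smul, transpose_mul, transpose_transpose, hS.eq, Matrix.mul_assoc,
    Matrix.smul_mul, Matrix.mul_smul, smul_smul, ← neg_add, ← add_smul]
  rw [add_halves, mul_neg, neg_smul]

end MatrixCalculus

theorem stmt_14_general {L M : ℕ}
    (Yb : Matrix (Fin L) (Fin M) ℝ) (R : Matrix (Fin L) (Fin L) ℝ) (hR : R.PosDef)
    (S : Matrix (Fin M) (Fin M) ℝ) (hS : S = Ybᵀ * R⁻¹ * Yb)
    (W : ℝ → Matrix (Fin M) (Fin M) ℝ)
    (hW : ∀ s ∈ Set.Icc (0:ℝ) 1,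
      HasDerivWithinAt W
        (-(1 / (2 * ((M : ℝ) - 1))) • (W s * (W s)ᵀ * S * W s))
        (Set.Icc 0 1) s)
    (Ptil : ℝ → Matrix (Fin M) (Fin M) ℝ)
    (hPtil : ∀ s : ℝ, Ptil s = ((M : ℝ) - 1)⁻¹ • (W s * (W s)ᵀ)) :
    ∀ s ∈ Set.Icc (0:ℝ) 1,
      HasDerivWithinAt Ptil (-(Ptil s * S * Ptil s)) (Set.Icc 0 1) s := by
  intro s hs
  have hS_symm : S.IsSymm :=
    hS ▸ (isHermitian_iff_isSymm.1 hR.isHermitian).inv.transpose_mul_mul Yb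
  have hcoef : 1 / (2 * ((M : ℝ) - 1)) = ((M : ℝ) - 1)⁻¹ / 2 := by
    rw [one_div, _root_.mul_inv_rev, div_eq_mul_inv]
  rw [funext hPtil]
  exact hasDerivWithinAt_smul_mul_transpose_self_riccati hS_symm _ (hcoef ▸ hW s hs)

/-- If `W` solves `dW/ds = −(1/(2(M−1))) W Wᵀ S W` where `S := (Y^b)ᵀ R⁻¹ Y^b` is
symmetric, then `P̃(s) := W(s) W(s)ᵀ/(M−1)` satisfies the ensemble-space Riccati
equation `dP̃/ds = − P̃ S P̃`. -/
theorem stmt_14 {L M : ℕ} (hM : 2 ≤ M)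
    (Yb : Matrix (Fin L) (Fin M) ℝ) (R : Matrix (Fin L) (Fin L) ℝ) (hR : R.PosDef)
    (S : Matrix (Fin M) (Fin M) ℝ) (hS : S = Ybᵀ * R⁻¹ * Yb)
    (W : ℝ → Matrix (Fin M) (Fin M) ℝ)
    (hW : ∀ s ∈ Set.Icc (0:ℝ) 1,
      HasDerivWithinAt W
        (-(1 / (2 * ((M : ℝ) - 1))) • (W s * (W s)ᵀ * S * W s))
        (Set.Icc 0 1) s)
    (Ptil : ℝ → Matrix (Fin M) (Fin M) ℝ)
    (hPtil : ∀ s : ℝ, Ptil s = ((M : ℝ) - 1)⁻¹ • (W s * (W s)ᵀ)) :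
    ∀ s ∈ Set.Icc (0:ℝ) 1,
      HasDerivWithinAt Ptil (-(Ptil s * S * Ptil s)) (Set.Icc 0 1) s :=
  stmt_14_general Yb R hR S hS W hW Ptil hPtil
end
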